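/- arXiv:1511.05882 — 2 statements merged into one kernel-verified Lean document; each statement's English description precedes it below -/
import Mathlib

section
/- For any ω-bouquet T, generated by a countable converse well-founded tree (T, R), whose root r has rank Θ, there exists a surjective d-map f : ([0, e(Θ)], I_1) → T with f(e(Θ)) = r, where e(Θ) = -1 + ω^Θ and I_1 is the interval topology. -/
open Ordinal Set

noncomputable section

universe u

/-! ## Basic topological notions (explicit topologies) -/

/-- The derived set (set of limit points) of `A` w.r.t. the topology `t`. -/
def dSet {X : Type u} (t : TopologicalSpace X) (A : Set X) : Set X :=
  {x | ∀ U : Set X, t.IsOpen U → x ∈ U → ∃ y, y ∈ U ∩ A ∧ y ≠ x}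

/-- Transfinite iterates of the derived-set operator, starting from the whole space. -/
def dIter {X : Type u} (t : TopologicalSpace X) (o : Ordinal.{u}) : Set X :=
  Ordinal.limitRecOn o Set.univ (fun _ ih => dSet t ih)
    (fun o _ ih => ⋂ (o' : Ordinal.{u}) (h : o' < o), ih o' h)

/-- The Cantor–Bendixson rank of a point: the least `ξ` with `x ∉ d^{ξ+1} X`. -/
def ptRank {X : Type u} (t : TopologicalSpace X) (x : X) : Ordinal.{u} :=
  sInf {ξ : Ordinal.{u} | x ∉ dIter t (ξ + 1)}

/-- The rank of a space: `sup_{x ∈ X} (ρ(x) + 1)`. -/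
def spRank (X : Type u) (t : TopologicalSpace X) : Ordinal.{u} :=
  ⨆ x : X, ptRank t x + 1

/-- A space is scattered if every nonempty subset has an isolated point. -/
def IsScattered {X : Type u} (t : TopologicalSpace X) : Prop :=
  ∀ A : Set X, A.Nonempty → ∃ x ∈ A, ∃ U : Set X, t.IsOpen U ∧ U ∩ A = {x}

/-- A `d`-map: continuous, open and pointwise discrete. -/
def IsDMap {X : Type u} {Y : Type*} (t : TopologicalSpace X) (s : TopologicalSpace Y)
    (f : X → Y) : Prop :=
  @Continuous _ _ t s f ∧ @IsOpenMap _ _ t s f ∧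
    ∀ y : Y, ∀ x : X, f x = y →
      ∃ U : Set X, t.IsOpen U ∧ x ∈ U ∧ ∀ z ∈ U, f z = y → z = x

/-! ## Hyperexponentials and hyperlogarithms -/

/-- The exponential `e ξ = -1 + ω^ξ`. -/
def eFun (x : Ordinal.{u}) : Ordinal.{u} := ω ^ x - 1

/-- `E` is the family of hyperexponentials: a family of normal functions with `E 1 = e`,
`E (α+β) = E α ∘ E β`, pointwise minimal among all such families. -/
def IsHyperexpFamily (E : Ordinal.{u} → Ordinal.{u} → Ordinal.{u}) : Prop :=
  (∀ a, Order.IsNormal (E a)) ∧ E 1 = eFun ∧ (∀ a b, E (a + b) = E a ∘ E b) ∧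
    ∀ F : Ordinal.{u} → Ordinal.{u} → Ordinal.{u},
      (∀ a, Order.IsNormal (F a)) → F 1 = eFun → (∀ a b, F (a + b) = F a ∘ F b) →
        ∀ a b, E a b ≤ F a b

/-- The end logarithm: `ℓ 0 = 0` and `ℓ ξ` is the unique `β` with `ξ = α + ω^β`. -/
def ellFun (x : Ordinal.{u}) : Ordinal.{u} :=
  if x = 0 then 0 else sInf {b : Ordinal.{u} | ∃ a, x = a + ω ^ b}

/-- An initial function maps initial segments onto initial segments. -/
def IsInitialFun (f : Ordinal.{u} → Ordinal.{u}) : Prop :=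
  ∀ o : Ordinal.{u}, ∃ o' : Ordinal.{u}, f '' Set.Iio o = Set.Iio o'

/-- `L` is the family of hyperlogarithms: a family of initial functions with `L 1 = ℓ`,
`L (α+β) = L β ∘ L α`, pointwise maximal among all such families. -/
def IsHyperlogFamily (L : Ordinal.{u} → Ordinal.{u} → Ordinal.{u}) : Prop :=
  (∀ a, IsInitialFun (L a)) ∧ L 1 = ellFun ∧ (∀ a b, L (a + b) = L b ∘ L a) ∧
    ∀ M : Ordinal.{u} → Ordinal.{u} → Ordinal.{u},
      (∀ a, IsInitialFun (M a)) → M 1 = ellFun → (∀ a b, M (a + b) = M b ∘ M a) →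
        ∀ a b, M a b ≤ L a b

/-! ## Icard topologies -/

/-- The generalized Icard topology `τ_λ` based on a space `(X, t)`, relative to a family `L`
of hyperlogarithms: the least topology containing `t` and all sets
`(α, β]_ξ = {x | α < ℓ^ξ ρ_t(x) ≤ β}` (including `α = -1`, i.e. `[0, β]_ξ`), for `ξ < λ`. -/
def IcardTop {X : Type u} (L : Ordinal.{u} → Ordinal.{u} → Ordinal.{u})
    (t : TopologicalSpace X) (lam : Ordinal.{u}) : TopologicalSpace X :=
  t ⊓ TopologicalSpace.generateFrom
    {S : Set X | ∃ ξ < lam,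
      (∃ b : Ordinal.{u}, S = {x | L ξ (ptRank t x) ≤ b}) ∨
      (∃ a b : Ordinal.{u}, a < b ∧ S = {x | a < L ξ (ptRank t x) ∧ L ξ (ptRank t x) ≤ b})}

/-! ## Ordinal spaces -/

/-- The ordinal corresponding to a point of `Θ.ToType`. -/
def ordVal {Θ : Ordinal.{u}} (x : Θ.ToType) : Ordinal.{u} :=
  @Ordinal.typein Θ.ToType (· < ·) isWellOrder_lt x

/-- The left topology `I₀` on (the canonical type of order type) `Θ`, generated by the
intervals `[0, β]`. -/
def leftTop (Θ : Ordinal.{u}) : TopologicalSpace Θ.ToType :=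
  TopologicalSpace.generateFrom {S : Set Θ.ToType | ∃ b : Θ.ToType, S = Set.Iic b}

/-- The interval topology `I₁` on `Θ`, generated by the sets `[0, β]` and `(α, β]`. -/
def intervalTop (Θ : Ordinal.{u}) : TopologicalSpace Θ.ToType :=
  TopologicalSpace.generateFrom
    {S : Set Θ.ToType | (∃ b, S = Set.Iic b) ∨ ∃ a b : Θ.ToType, S = Set.Ioc a b}

/-- The Icard topology `I_λ = (I₀)_λ` on the ordinal `Θ`: the least topology containing the
left topology and all sets `{x < Θ | α < ℓ^ξ x ≤ β}` for `ξ < λ`. -/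
def ordIcard (L : Ordinal.{u} → Ordinal.{u} → Ordinal.{u}) (Θ lam : Ordinal.{u}) :
    TopologicalSpace Θ.ToType :=
  leftTop Θ ⊓ TopologicalSpace.generateFrom
    {S : Set Θ.ToType | ∃ ξ < lam,
      (∃ b : Ordinal.{u}, S = {x | L ξ (ordVal x) ≤ b}) ∨
      (∃ a b : Ordinal.{u}, a < b ∧ S = {x | a < L ξ (ordVal x) ∧ L ξ (ordVal x) ≤ b})}

/-! ## Modal logic: GL and topological (d-)semantics -/

/-- Formulas of the basic modal language. -/
inductive Fml : Type
  | bot : Fml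
  | var : ℕ → Fml
  | imp : Fml → Fml → Fml
  | box : Fml → Fml

namespace Fml

/-- Negation. -/
def neg (p : Fml) : Fml := p.imp .bot

/-- Diamond. -/
def dia (p : Fml) : Fml := (p.neg.box).neg

end Fml

/-- The valuation determined by an assignment `V` of sets to propositional variables, in the
`d`-semantics: `⟦◇φ⟧ = d⟦φ⟧`, i.e. `⟦◻φ⟧` is the complement of the derived set of the
complement of `⟦φ⟧`. -/
def fval {X : Type u} (t : TopologicalSpace X) (V : ℕ → Set X) : Fml → Set X
  | .bot => ∅
  | .var n => V n
  | .imp p q => (fval t V p)ᶜ ∪ fval t V q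
  | .box p => (dSet t (fval t V p)ᶜ)ᶜ

/-- Classical tautologies (boxed formulas and variables treated as atoms). -/
def Tautology (φ : Fml) : Prop :=
  ∀ v : Fml → Bool, v .bot = false → (∀ p q : Fml, v (p.imp q) = (!(v p) || v q)) →
    v φ = true

/-- Provability in the Gödel–Löb provability logic `GL`. -/
inductive GLProv : Fml → Prop
  | taut {φ : Fml} : Tautology φ → GLProv φ
  | axK (p q : Fml) : GLProv (((p.imp q).box).imp ((p.box).imp q.box))
  | axLob (p : Fml) : GLProv ((((p.box).imp p).box).imp p.box)
  | mp {p q : Fml} : GLProv (p.imp q) → GLProv p → GLProv q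
  | nec {p : Fml} : GLProv p → GLProv p.box

/-- A set of formulas is GL-consistent if no finite conjunction of its members provably
implies `⊥`. -/
def GLConsistent (Γ : Set Fml) : Prop :=
  ¬ ∃ l : List Fml, (∀ φ ∈ l, φ ∈ Γ) ∧ GLProv (l.foldr .imp .bot)

/-- `Γ` is satisfied in the space `(X, t)`. -/
def SatisfiedIn {X : Type u} (t : TopologicalSpace X) (Γ : Set Fml) : Prop :=
  ∃ (V : ℕ → Set X) (x : X), ∀ φ ∈ Γ, x ∈ fval t V φ

/-- `GL` is strongly complete with respect to `(X, t)`. -/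
def StronglyCompleteFor {X : Type u} (t : TopologicalSpace X) : Prop :=
  ∀ Γ : Set Fml, GLConsistent Γ → SatisfiedIn t Γ

/-- Validity of a formula in a space under the `d`-semantics. -/
def ValidIn {X : Type u} (t : TopologicalSpace X) (φ : Fml) : Prop :=
  ∀ V : ℕ → Set X, fval t V φ = Set.univ

/-! ## Trees and ω-bouquets -/

/-- The upset topology of a relation: opens are the `R`-upward closed sets. -/
def upTop {T : Type u} (R : T → T → Prop) : TopologicalSpace T where
  IsOpen U := ∀ x ∈ U, ∀ y, R x y → y ∈ U
  isOpen_univ := fun x _ y _ => trivial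
  isOpen_inter := fun s t hs ht x hx y hR => ⟨hs x hx.1 y hR, ht x hx.2 y hR⟩
  isOpen_sUnion := fun S hS x hx y hR => by
    obtain ⟨s, hsS, hxs⟩ := hx
    exact ⟨s, hsS, hS s hsS x hxs y hR⟩

/-- A countable, converse well-founded tree. -/
structure IsOmegaTree {T : Type u} (R : T → T → Prop) : Prop where
  countable : Countable T
  trans : ∀ a b c, R a b → R b c → R a c
  irrefl : ∀ a, ¬ R a a
  predWellOrdered : ∀ t : T, IsWellOrder {s : T // R s t} (fun a b => R a.1 b.1)
  root : ∃! r : T, ∀ s : T, ¬ R s r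
  converseWellFounded : WellFounded (fun a b : T => R b a)

/-- The daughters (immediate successors) of a node. -/
def daughters {T : Type u} (R : T → T → Prop) (w : T) : Set T :=
  {v | R w v ∧ ¬ ∃ u, R w u ∧ R u v}

/-- The bouquet topology `σ_R`: the least topology extending the upset topology such that
whenever `w` has limit rank, `(v_i)` enumerates the daughters of `w` without repetition and
`n < ω`, the set `{w} ∪ ⋃_{i > n} ({v_i} ∪ R(v_i))` is open. -/
def sigmaTop {T : Type u} (R : T → T → Prop) : TopologicalSpace T :=
  upTop R ⊓ TopologicalSpace.generateFrom
    {S : Set T | ∃ w : T, Order.IsSuccLimit (ptRank (upTop R) w) ∧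
      ∃ v : ℕ → T, Function.Injective v ∧ Set.range v = daughters R w ∧
        ∃ n : ℕ, S = {w} ∪ ⋃ (i : ℕ) (_ : n < i), ({v i} ∪ {u | R (v i) u})}

/-! ## The club topology (via its neighborhood characterization) -/

/-- `C` is a club in (i.e. a closed unbounded subset of) the point `x`. -/
def IsClubIn {Θ : Ordinal.{u}} (C : Set Θ.ToType) (x : Θ.ToType) : Prop :=
  (∀ y ∈ C, y < x) ∧ (∀ z, z < x → ∃ y ∈ C, z < y) ∧
    ∀ z, z < x → (∃ w, w < z) → (∀ w, w < z → ∃ y ∈ C, w < y ∧ y < z) → z ∈ C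

/-- `t` is the club topology on `Θ`: a set `U` is a neighborhood of a point `x ∈ U` iff
`U` contains a club in `x` or `cf(x) < ℵ₁`. -/
def IsClubTop (Θ : Ordinal.{u}) (t : TopologicalSpace Θ.ToType) : Prop :=
  ∀ (U : Set Θ.ToType) (x : Θ.ToType), x ∈ U →
    (U ∈ @nhds _ t x ↔
      (Ordinal.cof (ordVal x) < Cardinal.aleph 1 ∨ ∃ C ⊆ U, IsClubIn C x))

/-!
Each node `w` gets a map `ordMap w` from `[0, e(ρ w)]` onto its cone `{w} ∪ R(w)`, by recursion
along the converse of `R`: the top point goes to `w`, and `[0, ω ^ ρ w)` is cut into consecutive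
blocks of order types `e(ρ v) + 1`, one for each term `v` of an enumeration of the daughters of
`w`, the block of `v` being mapped by `ordMap v`. The enumeration is injective when `ρ w` is a
limit and repeats every daughter infinitely often otherwise. Either way the blocks exhaust
`ω ^ ρ w`, the image of each left neighbourhood of the top point contains a tail
`{w} ∪ ⋃_{k > j} ({v_k} ∪ R(v_k))`, and these tails form a neighbourhood base of `w` in `σ_R`:
they are generators of `σ_R` in the limit case and equal the whole cone otherwise.

Blocks start at `0` or at successor ordinals, so translating a block to `0` is a local
homeomorphism of the ordinals. By induction, `ordMap w` therefore maps the neighbourhood filter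
of each point onto that of its image (continuity and openness) and is injective near each point
(discreteness). Finally `ordVal` embeds `([0, e(Θ)], I₁)` as an open subspace of the ordinals
with their order topology.
-/

open Filter Topology

namespace Ordinal

theorem isOpen_Iic (a : Ordinal.{u}) : IsOpen (Iic a) := by
  rw [← Order.Iio_succ]
  exact isOpen_Iio

theorem isOpenEmbedding_add_left {c : Ordinal.{u}} (hc : ¬ Order.IsSuccLimit c) :
    IsOpenEmbedding (c + ·) := by
  refine .of_continuous_injective_isOpenMap (isNormal_add_right c).continuous
    (fun _ _ => add_left_cancel) fun U hU => ?_
  rw [SuccOrder.isOpen_iff] at hU ⊢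
  rintro _ ⟨δ, hδ, rfl⟩ hlim
  have hδlim : Order.IsSuccLimit δ := by
    simpa [hc] using isSuccLimit_add_iff.1 hlim
  obtain ⟨a, ha, hsub⟩ := hU δ hδ hδlim
  refine ⟨c + a, add_lt_add_right ha c, fun ζ hζ => ⟨ζ - c, hsub ⟨lt_sub.2 hζ.1, ?_⟩, ?_⟩⟩
  · exact sub_lt_of_lt_add hζ.2 hδlim.pos
  · exact Ordinal.add_sub_cancel_of_le (le_self_add.trans hζ.1.le)

theorem nhds_add_of_not_isSuccLimit {c : Ordinal.{u}} (hc : ¬ Order.IsSuccLimit c)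
    (δ : Ordinal.{u}) : 𝓝 (c + δ) = map (c + ·) (𝓝 δ) :=
  ((isOpenEmbedding_add_left hc).map_nhds_eq δ).symm

end Ordinal

theorem eFun_zero : eFun 0 = 0 := by
  simp [eFun]

theorem eFun_of_ne_zero {x : Ordinal.{u}} (h : x ≠ 0) : eFun x = ω ^ x :=
  sub_eq_of_add_eq (one_add_of_omega0_le (left_le_opow ω (pos_iff_ne_zero.2 h)))

theorem opow_le_eFun_add_one (x : Ordinal.{u}) : ω ^ x ≤ eFun x + 1 := by
  rcases eq_or_ne x 0 with rfl | h
  · simp [eFun_zero]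
  · exact (eFun_of_ne_zero h).ge.trans le_self_add

theorem eFun_add_one_lt_opow {x y : Ordinal.{u}} (h : x < y) : eFun x + 1 < ω ^ y := by
  refine isPrincipal_add_omega0_opow y ((sub_le_self _ _).trans_lt ?_) ?_
  · exact (opow_lt_opow_iff_right one_lt_omega0).2 h
  · exact one_lt_omega0.trans_le (left_le_opow ω (zero_le.trans_lt h))

theorem dIter_zero {X : Type u} (t : TopologicalSpace X) : dIter t 0 = Set.univ := by
  rw [dIter, limitRecOn_zero]

theorem dIter_add_one {X : Type u} (t : TopologicalSpace X) (o : Ordinal.{u}) :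
    dIter t (o + 1) = dSet t (dIter t o) := by
  rw [dIter, limitRecOn_add_one]; rfl

theorem dIter_of_isSuccLimit {X : Type u} (t : TopologicalSpace X) {o : Ordinal.{u}}
    (ho : Order.IsSuccLimit o) : dIter t o = ⋂ o' < o, dIter t o' := by
  rw [dIter, limitRecOn_limit _ _ _ _ ho]; rfl

section OrdVal

variable {o : Ordinal.{u}}

theorem strictMono_ordVal : StrictMono (ordVal (Θ := o)) :=
  fun _ _ h => (typein_lt_typein _).2 h

theorem range_ordVal : range (ordVal (Θ := o)) = Iio o := by
  ext ξ
  refine ⟨?_, fun h => typein_surj _ (by rwa [type_toType])⟩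
  rintro ⟨x, rfl⟩
  exact typein_lt_self x

theorem ordVal_eq_of_forall_le {x : (o + 1).ToType} (hx : ∀ y, y ≤ x) : ordVal x = o := by
  obtain ⟨y, hy⟩ : o ∈ range (ordVal (Θ := o + 1)) := by
    rw [range_ordVal]
    exact lt_add_one o
  refine le_antisymm (Order.lt_add_one_iff.1 ?_) (hy.ge.trans (strictMono_ordVal.monotone (hx y)))
  rw [← mem_Iio, ← range_ordVal]
  exact mem_range_self x

theorem intervalTop_eq_induced : intervalTop o = .induced ordVal inferInstance := by
  let hemb : o.ToType ↪o Ordinal := .ofStrictMono _ strictMono_ordVal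
  refine le_antisymm (fun U hU => ?_) (le_generateFrom ?_)
  · obtain ⟨V, hV, rfl⟩ := isOpen_induced_iff.1 hU
    refine (@isOpen_iff_forall_mem_open _ (intervalTop o) _).2 fun x hx => ?_
    by_cases hmin : ∃ l, l < ordVal x
    · obtain ⟨α, hα, hsub⟩ := (SuccOrder.hasBasis_nhds_Ioc_of_exists_lt hmin).mem_iff.1
        (hV.mem_nhds (x := ordVal x) hx)
      obtain ⟨a, rfl⟩ : α ∈ range (ordVal (Θ := o)) := by
        rw [range_ordVal]
        exact hα.trans (typein_lt_self x)
      refine ⟨Ioc a x, fun z hz => hsub ⟨strictMono_ordVal hz.1, strictMono_ordVal.monotone hz.2⟩,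
        TopologicalSpace.isOpen_generateFrom_of_mem (.inr ⟨a, x, rfl⟩),
        strictMono_ordVal.lt_iff_lt.1 hα, le_rfl⟩
    · refine ⟨Iic x, fun z hz => ?_, TopologicalSpace.isOpen_generateFrom_of_mem (.inl ⟨x, rfl⟩),
        mem_Iic.2 le_rfl⟩
      have : ordVal z = ordVal x :=
        (strictMono_ordVal.monotone hz).eq_of_not_lt fun h => hmin ⟨_, h⟩
      exact mem_preimage.2 (this ▸ hx)
  · rintro _ (⟨b, rfl⟩ | ⟨a, b, rfl⟩)
    · exact ⟨Iic (ordVal b), Ordinal.isOpen_Iic _, hemb.preimage_Iic b⟩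
    · refine ⟨Ioc (ordVal a) (ordVal b), ?_, hemb.preimage_Ioc a b⟩
      rw [← Ioi_inter_Iic]
      exact isOpen_Ioi.inter (Ordinal.isOpen_Iic _)

theorem isOpenEmbedding_ordVal : @IsOpenEmbedding _ _ (intervalTop o) _ (ordVal (Θ := o)) := by
  let := intervalTop o
  exact ⟨⟨⟨intervalTop_eq_induced⟩, strictMono_ordVal.injective⟩, range_ordVal ▸ isOpen_Iio⟩

end OrdVal

theorem isDMap_comp_of_isOpenEmbedding {X : Type u} {Z Y : Type*} [tX : TopologicalSpace X]
    [TopologicalSpace Z] [tY : TopologicalSpace Y] {e : X → Z} (he : IsOpenEmbedding e)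
    {g : Z → Y} (hmap : ∀ x, map g (𝓝 (e x)) = 𝓝 (g (e x)))
    (hdisc : ∀ x, ∀ᶠ z in 𝓝 (e x), g z = g (e x) → z = e x) :
    IsDMap tX tY (g ∘ e) := by
  have hmap' (x : X) : map (g ∘ e) (𝓝 x) = 𝓝 (g (e x)) := by
    rw [← map_map, he.map_nhds_eq, hmap]
  refine ⟨continuous_iff_continuousAt.2 fun x => (hmap' x).le,
    isOpenMap_iff_nhds_le.2 fun x => (hmap' x).ge, ?_⟩
  rintro _ x rfl
  have hx : ∀ᶠ z in 𝓝 x, g (e z) = g (e x) → z = x :=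
    (he.continuous.tendsto x).eventually (hdisc x) |>.mono fun z hz hgz => he.injective (hz hgz)
  obtain ⟨U, hUsub, hU, hxU⟩ := mem_nhds_iff.1 hx
  exact ⟨U, hU, hxU, hUsub⟩

def sigmaGens {T : Type u} (R : T → T → Prop) : Set (Set T) :=
  {S : Set T | ∃ w : T, Order.IsSuccLimit (ptRank (upTop R) w) ∧
    ∃ v : ℕ → T, Function.Injective v ∧ Set.range v = daughters R w ∧
      ∃ n : ℕ, S = {w} ∪ ⋃ (i : ℕ) (_ : n < i), ({v i} ∪ {u | R (v i) u})}

theorem sigmaTop_eq {T : Type u} (R : T → T → Prop) :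
    sigmaTop R = upTop R ⊓ .generateFrom (sigmaGens R) := rfl

theorem isOpen_sigmaTop_of_isOpen_upTop {T : Type u} {R : T → T → Prop} {U : Set T}
    (h : IsOpen[upTop R] U) : IsOpen[sigmaTop R] U :=
  (inf_le_left : sigmaTop R ≤ upTop R) U h

theorem isOpen_sigmaTop_of_mem_sigmaGens {T : Type u} {R : T → T → Prop} {U : Set T}
    (h : U ∈ sigmaGens R) : IsOpen[sigmaTop R] U :=
  (inf_le_right : sigmaTop R ≤ _) U (TopologicalSpace.isOpen_generateFrom_of_mem h)

namespace IsOmegaTree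

variable {T : Type u} {R : T → T → Prop}

def cone (R : T → T → Prop) (w : T) : Set T := {w} ∪ {u | R w u}

theorem mem_cone_self (w : T) : w ∈ cone R w := .inl rfl

variable (hT : IsOmegaTree R)
include hT

section Rank

theorem cone_subset_cone {v w : T} (h : v ∈ cone R w) : cone R v ⊆ cone R w := by
  rcases h with rfl | hwv
  · exact subset_rfl
  · rintro u (rfl | hvu)
    exacts [.inr hwv, .inr (hT.trans _ _ _ hwv hvu)]

theorem isOpen_upTop_cone (w : T) : IsOpen[upTop R] (cone R w) :=
  fun _ hu _ huv => hT.cone_subset_cone hu (.inr huv)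

theorem mem_dSet_upTop_iff {A : Set T} {x : T} :
    x ∈ dSet (upTop R) A ↔ ∃ y, R x y ∧ y ∈ A := by
  refine ⟨fun h => ?_, fun ⟨y, hxy, hyA⟩ U hU hxU => ⟨y, ⟨hU x hxU y hxy, hyA⟩, ?_⟩⟩
  · obtain ⟨y, ⟨rfl | hxy, hyA⟩, hyx⟩ := h _ (hT.isOpen_upTop_cone x) (mem_cone_self x)
    exacts [absurd rfl hyx, ⟨y, hxy, hyA⟩]
  · rintro rfl
    exact hT.irrefl y hxy

def rank (w : T) : Ordinal.{u} := (hT.converseWellFounded.apply w).rank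

theorem rank_lt_rank {v w : T} (h : R w v) : hT.rank v < hT.rank w :=
  Acc.rank_lt_of_rel (hT.converseWellFounded.apply w) h

theorem exists_rel_le_rank {w : T} {c : Ordinal.{u}} (h : c < hT.rank w) :
    ∃ v, R w v ∧ c ≤ hT.rank v := by
  by_contra! hc
  refine h.not_ge ?_
  rw [rank, Acc.rank_eq]
  exact Ordinal.iSup_le fun v => Order.succ_le_of_lt (hc v.1 v.2)

theorem mem_dIter_upTop_iff (o : Ordinal.{u}) (x : T) :
    x ∈ dIter (upTop R) o ↔ o ≤ hT.rank x := by
  induction o using limitRecOn generalizing x with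
  | zero => simp [dIter_zero]
  | add_one o ih =>
    rw [dIter_add_one, hT.mem_dSet_upTop_iff, Order.add_one_le_iff]
    simp only [ih]
    exact ⟨fun ⟨y, hxy, hy⟩ => hy.trans_lt (hT.rank_lt_rank hxy), hT.exists_rel_le_rank⟩
  | limit o ho ih =>
    rw [dIter_of_isSuccLimit _ ho, ho.le_iff_forall_le]
    simp only [mem_iInter]
    exact forall₂_congr fun o' ho' => ih o' ho' x

theorem ptRank_upTop_eq_rank (x : T) : ptRank (upTop R) x = hT.rank x := by
  have : {ξ | x ∉ dIter (upTop R) (ξ + 1)} = Ici (hT.rank x) := by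
    ext ξ
    simp [hT.mem_dIter_upTop_iff, Order.add_one_le_iff]
  rw [ptRank, this, csInf_Ici]

end Rank

section Daughters

theorem exists_daughter_of_rel {w u : T} (h : R w u) : ∃ v ∈ daughters R w, u ∈ cone R v := by
  have wf := (hT.predWellOrdered u).wf
  let S : Set {s // R s u} := {s | R w s.1}
  by_cases hS : S.Nonempty
  · let m := wf.min S hS
    refine ⟨m.1, ⟨wf.min_mem S hS, ?_⟩, .inr m.2⟩
    rintro ⟨z, hwz, hzm⟩
    exact wf.not_lt_min S (x := ⟨z, hT.trans _ _ _ hzm m.2⟩) hwz hzm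
  · exact ⟨u, ⟨h, fun ⟨z, hwz, hzu⟩ => hS ⟨⟨z, hzu⟩, hwz⟩⟩, mem_cone_self u⟩

theorem rel_of_ne_root {r u : T} (hr : ∀ s, ¬ R s r) (hu : u ≠ r) : R r u := by
  obtain ⟨r', -, huniq⟩ := hT.root
  obtain rfl := huniq r hr
  have wf := (hT.predWellOrdered u).wf
  by_cases hpred : Nonempty {s // R s u}
  · let m := wf.min Set.univ univ_nonempty
    have hm : ∀ s, ¬ R s m.1 := fun s hs =>
      wf.not_lt_min Set.univ (x := ⟨s, hT.trans _ _ _ hs m.2⟩) trivial hs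
    exact huniq m.1 hm ▸ m.2
  · exact absurd (huniq u fun s hs => hpred ⟨⟨s, hs⟩⟩) hu

theorem cone_root {r : T} (hr : ∀ s, ¬ R s r) : cone R r = Set.univ :=
  eq_univ_of_forall fun u => (eq_or_ne u r).imp id (hT.rel_of_ne_root hr)

theorem exists_daughter_le_rank {w : T} {c : Ordinal.{u}} (h : c < hT.rank w) :
    ∃ v ∈ daughters R w, c ≤ hT.rank v := by
  obtain ⟨u, hwu, hcu⟩ := hT.exists_rel_le_rank h
  obtain ⟨v, hv, huv | hvu⟩ := hT.exists_daughter_of_rel hwu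
  exacts [⟨v, hv, huv ▸ hcu⟩, ⟨v, hv, hcu.trans (hT.rank_lt_rank hvu).le⟩]

theorem exists_daughter_rank_eq {w : T} {η : Ordinal.{u}} (h : hT.rank w = η + 1) :
    ∃ v ∈ daughters R w, hT.rank v = η := by
  obtain ⟨v, hv, hηv⟩ := hT.exists_daughter_le_rank (h ▸ lt_add_one η)
  exact ⟨v, hv, le_antisymm (Order.lt_add_one_iff.1 (h ▸ hT.rank_lt_rank hv.1)) hηv⟩

theorem infinite_daughters {w : T} (h : Order.IsSuccLimit (hT.rank w)) :
    (daughters R w).Infinite := by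
  intro hfin
  obtain ⟨v, hv, -⟩ := hT.exists_daughter_le_rank h.bot_lt
  obtain ⟨v, hv, hmax⟩ := exists_max_image _ hT.rank hfin ⟨v, hv⟩
  obtain ⟨v', hv', hle⟩ := hT.exists_daughter_le_rank (h.succ_lt (hT.rank_lt_rank hv.1))
  exact (Order.lt_succ (hT.rank v)).not_ge (hle.trans (hmax v' hv'))

structure IsDaughterEnum (w : T) (d : ℕ → T) : Prop where
  range_eq : range d = daughters R w
  injective_of_isSuccLimit : Order.IsSuccLimit (hT.rank w) → Function.Injective d
  frequently_of_not_isSuccLimit :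
    ¬ Order.IsSuccLimit (hT.rank w) → ∀ v ∈ daughters R w, ∀ m, ∃ j, m ≤ j ∧ d j = v

theorem exists_isDaughterEnum {w : T} (h : hT.rank w ≠ 0) : ∃ d, hT.IsDaughterEnum w d := by
  have := hT.countable
  have hcount := (daughters R w).to_countable
  by_cases hlim : Order.IsSuccLimit (hT.rank w)
  · have := (hT.infinite_daughters hlim).to_subtype
    have := hcount.to_subtype
    have := Encodable.ofCountable (daughters R w)
    have := Denumerable.ofEncodableOfInfinite (daughters R w)
    let e := (Denumerable.eqv (daughters R w)).symm
    exact ⟨Subtype.val ∘ e, by rw [e.surjective.range_comp, Subtype.range_coe],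
      fun _ => Subtype.val_injective.comp e.injective, fun h => absurd hlim h⟩
  · obtain ⟨v, hv, -⟩ := hT.exists_daughter_le_rank (pos_iff_ne_zero.2 h)
    obtain ⟨f, hf⟩ := hcount.exists_eq_range ⟨v, hv⟩
    refine ⟨fun n => f n.unpair.1, ?_, fun h => absurd h hlim, fun _ v hv m => ?_⟩
    · have hsurj : Function.Surjective fun n : ℕ => n.unpair.1 :=
        fun k => ⟨Nat.pair k 0, by simp⟩
      rw [hf]
      exact hsurj.range_comp f
    · obtain ⟨k, rfl⟩ := hf ▸ hv
      exact ⟨Nat.pair k m, Nat.right_le_pair k m, by simp⟩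

def daughterSeq (w : T) : ℕ → T :=
  @Classical.epsilon _ ⟨fun _ => w⟩ (hT.IsDaughterEnum w)

variable {w : T}

theorem isDaughterEnum_daughterSeq (h : hT.rank w ≠ 0) :
    hT.IsDaughterEnum w (hT.daughterSeq w) :=
  Classical.epsilon_spec (hT.exists_isDaughterEnum h)

theorem rel_daughterSeq (h : hT.rank w ≠ 0) (j : ℕ) : R w (hT.daughterSeq w j) :=
  ((hT.isDaughterEnum_daughterSeq h).range_eq ▸ mem_range_self j : _ ∈ daughters R w).1

end Daughters

section Blocks

variable {w : T}

variable (w) in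
def blockStart : ℕ → Ordinal.{u}
  | 0 => 0
  | j + 1 => blockStart j + (eFun (hT.rank (hT.daughterSeq w j)) + 1)

variable (w) in
theorem blockStart_strictMono : StrictMono (hT.blockStart w) :=
  strictMono_nat_of_lt_succ fun _ => lt_add_of_pos_right _ (zero_le.trans_lt (lt_add_one _))

variable (w) in
theorem not_isSuccLimit_blockStart : ∀ j, ¬ Order.IsSuccLimit (hT.blockStart w j)
  | 0 => not_isSuccLimit_zero
  | j + 1 => by
    rw [blockStart, ← add_assoc]
    exact Order.not_isSuccLimit_add_one _

theorem blockStart_add_lt_blockStart_succ {j : ℕ} {δ : Ordinal.{u}}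
    (hδ : δ ≤ eFun (hT.rank (hT.daughterSeq w j))) :
    hT.blockStart w j + δ < hT.blockStart w (j + 1) :=
  add_lt_add_right (Order.lt_add_one_iff.2 hδ) _

theorem blockStart_lt_opow (h : hT.rank w ≠ 0) : ∀ j, hT.blockStart w j < ω ^ hT.rank w
  | 0 => opow_pos _ omega0_pos
  | j + 1 => isPrincipal_add_omega0_opow _ (blockStart_lt_opow h j)
      (eFun_add_one_lt_opow (hT.rank_lt_rank (hT.rel_daughterSeq h j)))

theorem exists_lt_blockStart (h : hT.rank w ≠ 0) {ξ : Ordinal.{u}} (hξ : ξ < ω ^ hT.rank w) :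
    ∃ j, ξ < hT.blockStart w j := by
  have hd := hT.isDaughterEnum_daughterSeq h
  rcases zero_or_succ_or_isSuccLimit (hT.rank w) with h0 | ⟨η, hη⟩ | hlim
  · exact absurd h0 h
  · -- a daughter of rank `η` recurs, and each recurrence adds a block of length at least `ω ^ η`
    obtain ⟨v, hv, hvη⟩ := hT.exists_daughter_rank_eq (hη.symm.trans (Order.succ_eq_add_one η))
    have hrec := hd.frequently_of_not_isSuccLimit (hη ▸ Order.not_isSuccLimit_succ η) v hv
    have hmul (n : ℕ) : ∃ j, ω ^ η * n ≤ hT.blockStart w j := by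
      induction n with
      | zero => exact ⟨0, by simp⟩
      | succ n ih =>
        obtain ⟨j, hj⟩ := ih
        obtain ⟨k, hjk, hk⟩ := hrec j
        refine ⟨k + 1, ?_⟩
        rw [Nat.cast_succ, mul_add_one, blockStart, hk, hvη]
        exact add_le_add (hj.trans ((hT.blockStart_strictMono w).monotone hjk))
          (opow_le_eFun_add_one η)
    rw [← hη, lt_omega0_opow_succ] at hξ
    obtain ⟨n, hn⟩ := hξ
    obtain ⟨j, hj⟩ := hmul n
    exact ⟨j, hn.trans_le hj⟩
  · obtain ⟨β, hβ, hξβ⟩ := (lt_opow_of_isSuccLimit omega0_ne_zero hlim).1 hξ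
    obtain ⟨v, hv, hβv⟩ := hT.exists_daughter_le_rank hβ
    obtain ⟨j, rfl⟩ : v ∈ range (hT.daughterSeq w) := hd.range_eq ▸ hv
    refine ⟨j + 1, hξβ.trans_le ?_⟩
    calc ω ^ β ≤ ω ^ hT.rank (hT.daughterSeq w j) := opow_le_opow_right omega0_pos hβv
      _ ≤ _ := opow_le_eFun_add_one _
      _ ≤ hT.blockStart w (j + 1) := le_add_self

variable (w) in
def blockIndex (ξ : Ordinal.{u}) : ℕ := sInf {j | ξ < hT.blockStart w (j + 1)}

theorem blockIndex_blockStart_add {j : ℕ} {δ : Ordinal.{u}}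
    (hδ : δ ≤ eFun (hT.rank (hT.daughterSeq w j))) :
    hT.blockIndex w (hT.blockStart w j + δ) = j := by
  have hj := hT.blockStart_add_lt_blockStart_succ hδ
  refine le_antisymm (Nat.sInf_le hj) (not_lt.1 fun hlt => ?_)
  have hmem : hT.blockStart w j + δ < hT.blockStart w (hT.blockIndex w _ + 1) :=
    Nat.sInf_mem (s := {k | _ < hT.blockStart w (k + 1)}) ⟨j, hj⟩
  exact (hmem.trans_le ((hT.blockStart_strictMono w).monotone hlt)).not_ge le_self_add

theorem exists_eq_blockStart_add (h : hT.rank w ≠ 0) {ξ : Ordinal.{u}} (hξ : ξ < ω ^ hT.rank w) :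
    ∃ j δ, δ ≤ eFun (hT.rank (hT.daughterSeq w j)) ∧ ξ = hT.blockStart w j + δ := by
  obtain ⟨j, hj⟩ := hT.exists_lt_blockStart h hξ
  set k := hT.blockIndex w ξ
  have hk : ξ < hT.blockStart w (k + 1) :=
    Nat.sInf_mem (s := {k | ξ < hT.blockStart w (k + 1)})
      ⟨j, hj.trans_le ((hT.blockStart_strictMono w).monotone j.le_succ)⟩
  have hle : hT.blockStart w k ≤ ξ := by
    rcases Nat.eq_zero_or_eq_succ_pred k with hk0 | hk1
    · exact hk0 ▸ zero_le
    · rw [hk1]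
      exact not_lt.1 (Nat.notMem_of_lt_sInf (hk1 ▸ Nat.lt_succ_self _ : k.pred < k))
  refine ⟨k, ξ - hT.blockStart w k, ?_, (Ordinal.add_sub_cancel_of_le hle).symm⟩
  exact Order.lt_add_one_iff.1 (sub_lt_of_lt_add hk (zero_le.trans_lt (lt_add_one _)))

end Blocks

section OrdMap

def ordMap : T → Ordinal.{u} → T :=
  hT.converseWellFounded.fix fun w IH ξ =>
    if h : hT.rank w ≠ 0 ∧ ξ < ω ^ hT.rank w then
      IH _ (hT.rel_daughterSeq h.1 (hT.blockIndex w ξ))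
        (ξ - hT.blockStart w (hT.blockIndex w ξ))
    else w

variable {w : T}

theorem ordMap_eq (w : T) (ξ : Ordinal.{u}) : hT.ordMap w ξ =
    if hT.rank w ≠ 0 ∧ ξ < ω ^ hT.rank w then
      hT.ordMap (hT.daughterSeq w (hT.blockIndex w ξ)) (ξ - hT.blockStart w (hT.blockIndex w ξ))
    else w := by
  rw [ordMap, WellFounded.fix_eq]
  split_ifs <;> rfl

theorem ordMap_of_rank_eq_zero (h : hT.rank w = 0) (ξ : Ordinal.{u}) : hT.ordMap w ξ = w := by
  rw [ordMap_eq, if_neg (by simp [h])]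

theorem ordMap_opow_rank (w : T) : hT.ordMap w (ω ^ hT.rank w) = w := by
  rw [ordMap_eq, if_neg (by simp)]

theorem ordMap_eFun_rank (w : T) : hT.ordMap w (eFun (hT.rank w)) = w := by
  rcases eq_or_ne (hT.rank w) 0 with h | h
  · exact hT.ordMap_of_rank_eq_zero h _
  · rw [eFun_of_ne_zero h, ordMap_opow_rank]

theorem ordMap_blockStart_add (h : hT.rank w ≠ 0) {j : ℕ} {δ : Ordinal.{u}}
    (hδ : δ ≤ eFun (hT.rank (hT.daughterSeq w j))) :
    hT.ordMap w (hT.blockStart w j + δ) = hT.ordMap (hT.daughterSeq w j) δ := by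
  have hlt := (hT.blockStart_add_lt_blockStart_succ hδ).trans (hT.blockStart_lt_opow h _)
  rw [ordMap_eq, if_pos ⟨h, hlt⟩, hT.blockIndex_blockStart_add hδ, Ordinal.add_sub_cancel]

theorem ordMap_comp_blockStart_add_eventuallyEq (h : hT.rank w ≠ 0) {j : ℕ} {δ : Ordinal.{u}}
    (hδ : δ ≤ eFun (hT.rank (hT.daughterSeq w j))) :
    hT.ordMap w ∘ (hT.blockStart w j + ·) =ᶠ[𝓝 δ] hT.ordMap (hT.daughterSeq w j) := by
  filter_upwards [(Ordinal.isOpen_Iic _).mem_nhds hδ] with δ' hδ'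
  exact hT.ordMap_blockStart_add h hδ'

theorem le_eFun_rank_cases {ξ : Ordinal.{u}} (hξ : ξ ≤ eFun (hT.rank w)) :
    hT.rank w = 0 ∧ ξ = 0 ∨ hT.rank w ≠ 0 ∧ ξ = ω ^ hT.rank w ∨
      hT.rank w ≠ 0 ∧ ∃ j δ, δ ≤ eFun (hT.rank (hT.daughterSeq w j)) ∧
        ξ = hT.blockStart w j + δ := by
  rcases eq_or_ne (hT.rank w) 0 with h | h
  · rw [h, eFun_zero, nonpos_iff_eq_zero] at hξ
    exact .inl ⟨h, hξ⟩
  · rw [eFun_of_ne_zero h] at hξ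
    exact .inr (hξ.eq_or_lt.imp (⟨h, ·⟩) fun hlt => ⟨h, hT.exists_eq_blockStart_add h hlt⟩)

variable (w) in
theorem ordMap_mem_cone (ξ : Ordinal.{u}) : hT.ordMap w ξ ∈ cone R w := by
  induction w using WellFounded.induction hT.converseWellFounded generalizing ξ with
  | _ w ih =>
  rw [ordMap_eq]
  split_ifs with h
  · have hw := hT.rel_daughterSeq h.1 (hT.blockIndex w ξ)
    exact hT.cone_subset_cone (.inr hw) (ih _ hw _)
  · exact mem_cone_self w

theorem ordMap_ne_self (h : hT.rank w ≠ 0) {ξ : Ordinal.{u}} (hξ : ξ < ω ^ hT.rank w) :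
    hT.ordMap w ξ ≠ w := by
  obtain ⟨j, δ, hδ, rfl⟩ := hT.exists_eq_blockStart_add h hξ
  rw [hT.ordMap_blockStart_add h hδ]
  intro hw
  have hwj := hT.rel_daughterSeq h j
  rcases hw ▸ hT.ordMap_mem_cone _ δ with hj | hjw
  · rw [← hj] at hwj
    exact hT.irrefl w hwj
  · exact hT.irrefl w (hT.trans _ _ _ hwj hjw)

theorem exists_ordMap_eq {u : T} (hu : u ∈ cone R w) :
    ∃ ξ ≤ eFun (hT.rank w), hT.ordMap w ξ = u := by
  induction w using WellFounded.induction hT.converseWellFounded with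
  | _ w ih =>
  rcases hu with rfl | hwu
  · exact ⟨_, le_rfl, hT.ordMap_eFun_rank u⟩
  have h : hT.rank w ≠ 0 := (zero_le.trans_lt (hT.rank_lt_rank hwu)).ne'
  obtain ⟨v, hv, hu⟩ := hT.exists_daughter_of_rel hwu
  obtain ⟨j, rfl⟩ : v ∈ range (hT.daughterSeq w) :=
    (hT.isDaughterEnum_daughterSeq h).range_eq ▸ hv
  obtain ⟨δ, hδ, rfl⟩ := ih _ hv.1 hu
  refine ⟨hT.blockStart w j + δ, ?_, hT.ordMap_blockStart_add h hδ⟩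
  rw [eFun_of_ne_zero h]
  exact ((hT.blockStart_add_lt_blockStart_succ hδ).trans (hT.blockStart_lt_opow h _)).le

end OrdMap

section BouquetTopology

theorem nhds_upTop (y : T) : @nhds T (upTop R) y = 𝓟 (cone R y) := by
  refine le_antisymm (le_principal_iff.2 <|
    @IsOpen.mem_nhds _ (upTop R) _ _ (hT.isOpen_upTop_cone y) (mem_cone_self y)) ?_
  refine (@nhds_basis_opens T (upTop R) y).ge_iff.2 fun U ⟨hyU, hU⟩ => mem_principal.2 ?_
  rintro u (rfl | hyu)
  exacts [hyU, hU _ hyU u hyu]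

theorem nhds_sigmaTop_le (y : T) : @nhds T (sigmaTop R) y ≤ 𝓟 (cone R y) :=
  (nhds_mono inf_le_left).trans_eq (hT.nhds_upTop y)

/-- A generator of `sigmaTop R` that contains `y` other than as its centre contains the whole
cone of `y`. -/
theorem tendsto_nhds_sigmaTop {α : Type*} {f : α → T} {l : Filter α} {y : T}
    (hcone : ∀ᶠ a in l, f a ∈ cone R y)
    (hgen : Order.IsSuccLimit (hT.rank y) → ∀ v : ℕ → T, Function.Injective v →
      range v = daughters R y → ∀ n, ∀ᶠ a in l, f a ∈ {y} ∪ ⋃ (i) (_ : n < i), cone R (v i)) :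
    Tendsto f l (@nhds T (sigmaTop R) y) := by
  rw [sigmaTop_eq, nhds_inf, hT.nhds_upTop, tendsto_inf, tendsto_principal]
  refine ⟨hcone, TopologicalSpace.tendsto_nhds_generateFrom_iff.2 ?_⟩
  rintro _ ⟨w, hlim, v, hv, hrange, n, rfl⟩ (rfl | hy)
  · exact hgen (hT.ptRank_upTop_eq_rank y ▸ hlim) v hv hrange n
  · obtain ⟨i, hi, hy⟩ := mem_iUnion₂.1 hy
    exact hcone.mono fun a ha => .inr (mem_iUnion₂.2 ⟨i, hi, hT.cone_subset_cone hy ha⟩)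

variable {w : T}

variable (w) in
def tail (j : ℕ) : Set T := {w} ∪ ⋃ (k) (_ : j < k), cone R (hT.daughterSeq w k)

theorem isOpen_tail (h : hT.rank w ≠ 0) (j : ℕ) : IsOpen[sigmaTop R] (hT.tail w j) := by
  have hd := hT.isDaughterEnum_daughterSeq h
  by_cases hlim : Order.IsSuccLimit (hT.rank w)
  · exact isOpen_sigmaTop_of_mem_sigmaGens ⟨w, (hT.ptRank_upTop_eq_rank w).symm ▸ hlim,
      _, hd.injective_of_isSuccLimit hlim, hd.range_eq, j, rfl⟩
  suffices hT.tail w j = cone R w from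
    this ▸ isOpen_sigmaTop_of_isOpen_upTop (hT.isOpen_upTop_cone w)
  refine subset_antisymm (union_subset (singleton_subset_iff.2 (mem_cone_self w))
    (iUnion₂_subset fun k _ => hT.cone_subset_cone (.inr (hT.rel_daughterSeq h k)))) ?_
  rintro u (rfl | hwu)
  · exact .inl rfl
  obtain ⟨v, hv, hu⟩ := hT.exists_daughter_of_rel hwu
  obtain ⟨k, hjk, rfl⟩ := hd.frequently_of_not_isSuccLimit hlim v hv (j + 1)
  exact .inr (mem_iUnion₂.2 ⟨k, hjk, hu⟩)

theorem tail_subset_image_ordMap (h : hT.rank w ≠ 0) {j : ℕ} {α : Ordinal.{u}}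
    (hα : α < hT.blockStart w j) : hT.tail w j ⊆ hT.ordMap w '' Ioc α (ω ^ hT.rank w) := by
  rintro u (rfl | hu)
  · exact ⟨_, ⟨hα.trans (hT.blockStart_lt_opow h j), le_rfl⟩, hT.ordMap_opow_rank u⟩
  obtain ⟨k, hjk, hu⟩ := mem_iUnion₂.1 hu
  obtain ⟨δ, hδ, rfl⟩ := hT.exists_ordMap_eq hu
  refine ⟨hT.blockStart w k + δ, ⟨?_, ?_⟩, hT.ordMap_blockStart_add h hδ⟩
  · exact (hα.trans (hT.blockStart_strictMono w hjk)).trans_le le_self_add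
  · exact ((hT.blockStart_add_lt_blockStart_succ hδ).trans (hT.blockStart_lt_opow h _)).le

theorem eventually_ordMap_mem_tail (h : hT.rank w ≠ 0) (j : ℕ) :
    ∀ᶠ ζ in 𝓝 (ω ^ hT.rank w), hT.ordMap w ζ ∈ hT.tail w j := by
  have hIoc : Ioc (hT.blockStart w (j + 1)) (ω ^ hT.rank w) ∈ 𝓝 (ω ^ hT.rank w) :=
    (SuccOrder.hasBasis_nhds_Ioc_of_exists_lt ⟨0, opow_pos _ omega0_pos⟩).mem_of_mem
      (hT.blockStart_lt_opow h _)
  filter_upwards [hIoc] with ζ ⟨hjζ, hζ⟩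
  rcases hζ.eq_or_lt with rfl | hζ
  · rw [ordMap_opow_rank]
    exact .inl rfl
  obtain ⟨k, δ, hδ, rfl⟩ := hT.exists_eq_blockStart_add h hζ
  have hjk : j + 1 < k + 1 := (hT.blockStart_strictMono w).lt_iff_lt.1
    (hjζ.trans (hT.blockStart_add_lt_blockStart_succ hδ))
  rw [hT.ordMap_blockStart_add h hδ]
  exact .inr (mem_iUnion₂.2 ⟨k, Nat.succ_lt_succ_iff.1 hjk, hT.ordMap_mem_cone _ δ⟩)

theorem exists_tail_subset (hlim : Order.IsSuccLimit (hT.rank w)) {v : ℕ → T}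
    (hrange : range v = daughters R w) (n : ℕ) :
    ∃ j, hT.tail w j ⊆ {w} ∪ ⋃ (i) (_ : n < i), cone R (v i) := by
  have hd := hT.isDaughterEnum_daughterSeq hlim.bot_lt.ne'
  choose g hg using fun i => (hd.range_eq.trans hrange.symm).ge (mem_range_self i)
  refine ⟨(Finset.range (n + 1)).sup g,
    union_subset_union_right _ (iUnion₂_subset fun k hk => ?_)⟩
  obtain ⟨i, hi⟩ : hT.daughterSeq w k ∈ range v := hrange ▸ hd.range_eq ▸ mem_range_self k
  have hni : n < i := by
    refine not_le.1 fun hin => hk.not_ge ?_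
    rw [← hd.injective_of_isSuccLimit hlim ((hg i).trans hi)]
    exact Finset.le_sup (Finset.mem_range.2 (Nat.lt_succ_of_le hin))
  rw [← hi]
  exact subset_iUnion₂ (s := fun i (_ : n < i) => cone R (v i)) i hni

theorem tendsto_ordMap_nhds_opow_rank (h : hT.rank w ≠ 0) :
    Tendsto (hT.ordMap w) (𝓝 (ω ^ hT.rank w)) (@nhds T (sigmaTop R) w) :=
  hT.tendsto_nhds_sigmaTop (.of_forall (hT.ordMap_mem_cone w)) fun hlim v _ hrange n => by
    obtain ⟨j, hj⟩ := hT.exists_tail_subset hlim hrange n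
    exact (hT.eventually_ordMap_mem_tail h j).mono fun _ hζ => hj hζ

theorem nhds_le_map_ordMap_nhds_opow_rank (h : hT.rank w ≠ 0) :
    @nhds T (sigmaTop R) w ≤ map (hT.ordMap w) (𝓝 (ω ^ hT.rank w)) := by
  intro S hS
  obtain ⟨α, hα, hsub⟩ :=
    (SuccOrder.hasBasis_nhds_Ioc_of_exists_lt ⟨0, opow_pos _ omega0_pos⟩).mem_iff.1 hS
  obtain ⟨j, hj⟩ := hT.exists_lt_blockStart h hα
  refine mem_of_superset (@IsOpen.mem_nhds _ (sigmaTop R) _ _ (hT.isOpen_tail h j) (.inl rfl))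
    ((hT.tail_subset_image_ordMap h hj).trans ?_)
  rintro _ ⟨ζ, hζ, rfl⟩
  exact hsub hζ

theorem map_ordMap_nhds {ξ : Ordinal.{u}} (hξ : ξ ≤ eFun (hT.rank w)) :
    map (hT.ordMap w) (𝓝 ξ) = @nhds T (sigmaTop R) (hT.ordMap w ξ) := by
  induction w using WellFounded.induction hT.converseWellFounded generalizing ξ with
  | _ w ih =>
  rcases hT.le_eFun_rank_cases hξ with ⟨h, rfl⟩ | ⟨h, rfl⟩ | ⟨h, j, δ, hδ, rfl⟩
  · rw [SuccOrder.nhds_eq_pure.2 not_isSuccLimit_zero, map_pure, hT.ordMap_of_rank_eq_zero h]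
    refine le_antisymm (@pure_le_nhds T (sigmaTop R) w) ((hT.nhds_sigmaTop_le w).trans ?_)
    rw [← principal_singleton, principal_mono]
    rintro u (rfl | hwu)
    · rfl
    · exact absurd (h ▸ hT.rank_lt_rank hwu) not_lt_zero
  · rw [ordMap_opow_rank]
    exact le_antisymm (hT.tendsto_ordMap_nhds_opow_rank h)
      (hT.nhds_le_map_ordMap_nhds_opow_rank h)
  · rw [Ordinal.nhds_add_of_not_isSuccLimit (hT.not_isSuccLimit_blockStart w j), map_map,
      map_congr (hT.ordMap_comp_blockStart_add_eventuallyEq h hδ),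
      ih _ (hT.rel_daughterSeq h j) hδ, hT.ordMap_blockStart_add h hδ]

theorem eventually_ordMap_eq_imp_eq {ξ : Ordinal.{u}} (hξ : ξ ≤ eFun (hT.rank w)) :
    ∀ᶠ ζ in 𝓝 ξ, hT.ordMap w ζ = hT.ordMap w ξ → ζ = ξ := by
  induction w using WellFounded.induction hT.converseWellFounded generalizing ξ with
  | _ w ih =>
  rcases hT.le_eFun_rank_cases hξ with ⟨h, rfl⟩ | ⟨h, rfl⟩ | ⟨h, j, δ, hδ, rfl⟩
  · rw [SuccOrder.nhds_eq_pure.2 not_isSuccLimit_zero]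
    exact eventually_pure.2 fun _ => rfl
  · filter_upwards [(Ordinal.isOpen_Iic _).mem_nhds (mem_Iic.2 le_rfl)] with ζ hζ hw
    by_contra hne
    exact hT.ordMap_ne_self h (hζ.lt_of_ne hne) (hw.trans (hT.ordMap_opow_rank w))
  · rw [Ordinal.nhds_add_of_not_isSuccLimit (hT.not_isSuccLimit_blockStart w j), eventually_map]
    filter_upwards [ih _ (hT.rel_daughterSeq h j) hδ,
      hT.ordMap_comp_blockStart_add_eventuallyEq h hδ] with δ' hδ' heq hw
    rw [← heq, ← hT.ordMap_blockStart_add h hδ] at hδ'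
    rw [hδ' hw]

end BouquetTopology

end IsOmegaTree

/-- For any ω-bouquet generated by a countable converse well-founded tree
`(T, R)` whose root `r` has rank `Θ`, there is a surjective d-map
`f : ([0, e(Θ)], I₁) → T` with `f(e(Θ)) = r`. -/
theorem exists_surjective_dMap_interval_onto_bouquet
    {T : Type u} (R : T → T → Prop) (hT : IsOmegaTree R)
    (r : T) (hr : ∀ s : T, ¬ R s r) (Θ : Ordinal.{u}) (hΘ : ptRank (upTop R) r = Θ) :
    ∃ f : (eFun Θ + 1).ToType → T,
      Function.Surjective f ∧ IsDMap (intervalTop (eFun Θ + 1)) (sigmaTop R) f ∧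
        ∀ x : (eFun Θ + 1).ToType, (∀ y, y ≤ x) → f x = r := by
  rw [hT.ptRank_upTop_eq_rank] at hΘ
  subst hΘ
  have hle (x : (eFun (hT.rank r) + 1).ToType) : ordVal x ≤ eFun (hT.rank r) :=
    Order.lt_add_one_iff.1 (range_ordVal.subset (mem_range_self x))
  refine ⟨hT.ordMap r ∘ ordVal, fun u => ?_, ?_, fun x hx => ?_⟩
  · obtain ⟨ξ, hξ, rfl⟩ := hT.exists_ordMap_eq (hT.cone_root hr ▸ mem_univ u)
    obtain ⟨x, rfl⟩ := range_ordVal.ge (Order.lt_add_one_iff.2 hξ)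
    exact ⟨x, rfl⟩
  · let := intervalTop (eFun (hT.rank r) + 1)
    let := sigmaTop R
    exact isDMap_comp_of_isOpenEmbedding isOpenEmbedding_ordVal
      (fun x => hT.map_ordMap_nhds (hle x)) fun x => hT.eventually_ordMap_eq_imp_eq (hle x)
  · rw [Function.comp_apply, ordVal_eq_of_forall_le hx, hT.ordMap_eFun_rank]
end
end

section
/- Löb's axiom ◻(◻p → p) → ◻p is valid in a topological space X under the d-semantics if and only if X is scattered. -/
/-!
With `A = ⟦¬p⟧`, Löb's axiom says exactly `dA ⊆ d(A ∖ dA)`: every limit point of `A` is a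
limit of isolated points of `A`. In a scattered space this holds because, for a neighbourhood
`U` of a limit point `x` of `A`, an isolated point of `U ∩ A` is isolated in `A` and differs
from `x`. Conversely, a nonempty `A` without isolated points satisfies `A ⊆ dA`, so
`d(A ∖ dA) = d∅ = ∅` while `dA ⊇ A` is nonempty.
-/

open Ordinal Set

noncomputable section

universe u

def Fml.lob (p : Fml) : Fml := ((p.box.imp p).box).imp p.box

section DerivedSet

variable {X : Type u} {t : TopologicalSpace X}

theorem notMem_dSet_of_inter_subset_singleton {A U : Set X} {x : X} (hU : t.IsOpen U)
    (hxU : x ∈ U) (hUA : U ∩ A ⊆ {x}) : x ∉ dSet t A := fun hx => by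
  obtain ⟨y, hy, hyx⟩ := hx U hU hxU
  exact hyx (hUA hy)

theorem mem_dSet_of_not_isolated {A : Set X} {x : X} (hxA : x ∈ A)
    (hx : ∀ U, t.IsOpen U → U ∩ A ≠ {x}) : x ∈ dSet t A := by
  intro U hU hxU
  by_contra! hU_sub
  exact hx U hU <| Subset.antisymm (fun y hy => hU_sub y hy)
    (singleton_subset_iff.mpr ⟨hxU, hxA⟩)

theorem dSet_empty : dSet t ∅ = ∅ :=
  eq_empty_of_forall_notMem fun _ hx =>
    notMem_dSet_of_inter_subset_singleton t.isOpen_univ (mem_univ _) (by simp) hx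

theorem IsScattered.dSet_subset_dSet_diff (hs : IsScattered t) (A : Set X) :
    dSet t A ⊆ dSet t (A \ dSet t A) := by
  intro x hx U hU hxU
  obtain ⟨z, hz, -⟩ := hx U hU hxU
  obtain ⟨y, ⟨hyU, hyA⟩, W, hW, hWUA⟩ := hs (U ∩ A) ⟨z, hz⟩
  have hyW : y ∈ W := (hWUA.symm.subset rfl).1
  have hWU_open : t.IsOpen (W ∩ U) := t.isOpen_inter W U hW hU
  have hWU_sub : W ∩ U ∩ A ⊆ {y} := by
    rw [inter_assoc, hWUA]
  have hy_isolated : y ∉ dSet t A :=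
    notMem_dSet_of_inter_subset_singleton hWU_open ⟨hyW, hyU⟩ hWU_sub
  have hyx : y ≠ x := by
    rintro rfl
    exact hy_isolated hx
  exact ⟨y, ⟨hyU, hyA, hy_isolated⟩, hyx⟩

theorem isScattered_of_dSet_subset_dSet_diff
    (h : ∀ A : Set X, dSet t A ⊆ dSet t (A \ dSet t A)) : IsScattered t := by
  intro A ⟨x, hxA⟩
  by_contra! hno
  have hA_sub : A ⊆ dSet t A := fun y hy => mem_dSet_of_not_isolated hy (hno y hy)
  have hA_diff : A \ dSet t A = ∅ := sdiff_eq_empty.mpr hA_sub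
  have hx_limit := h A (hA_sub hxA)
  rw [hA_diff, dSet_empty] at hx_limit
  exact hx_limit

theorem isScattered_iff_dSet_subset_dSet_diff :
    IsScattered t ↔ ∀ A : Set X, dSet t A ⊆ dSet t (A \ dSet t A) :=
  ⟨IsScattered.dSet_subset_dSet_diff, isScattered_of_dSet_subset_dSet_diff⟩

end DerivedSet

theorem fval_lob {X : Type u} (t : TopologicalSpace X) (V : ℕ → Set X) (p : Fml) :
    fval t V p.lob =
      (dSet t (fval t V p)ᶜ)ᶜ ∪ dSet t ((fval t V p)ᶜ \ dSet t (fval t V p)ᶜ) := by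
  simp only [Fml.lob, fval, compl_union, compl_compl, sdiff_eq, union_comm]

theorem validIn_lob_var_iff {X : Type u} (t : TopologicalSpace X) (n : ℕ) :
    ValidIn t (Fml.var n).lob ↔ ∀ A : Set X, dSet t A ⊆ dSet t (A \ dSet t A) := by
  simp only [ValidIn, fval_lob, ← compl_subset_iff_union, compl_compl]
  refine ⟨fun h A => ?_, fun h V => h (V n)ᶜ⟩
  simpa [fval] using h fun _ => Aᶜ

/-- Löb's axiom `◻(◻p → p) → ◻p` is valid in a topological space under the
d-semantics if and only if the space is scattered. -/
theorem lob_valid_iff_scattered {X : Type u} (t : TopologicalSpace X) :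
    ValidIn t (((((Fml.var 0).box.imp (Fml.var 0)).box).imp (Fml.var 0).box)) ↔
      IsScattered t :=
  (validIn_lob_var_iff t 0).trans isScattered_iff_dSet_subset_dSet_diff.symm

end
end
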